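/- arXiv:1903.05949 — 3 statements merged into one kernel-verified Lean document; each statement's English description precedes it below -/
import Mathlib

section
/- Let a₁, …, a_l be l distinct real numbers, d₁, …, d_l ∈ ℤ≥0, and let f_k = t - a_k v in S = ℝ[s,t,u,v] (bigraded with s,u of degree (1,0) and t,v of degree (0,1)). Then for (m,m') ∈ ℤ≥0², the dimension of the bidegree-(m,m') graded piece of the sum of ideals Σ_{k=1}^{l} f_k^{d_k} S(0,-d_k) equals (m+1) · min( m'+1, Σ_{k=1}^{l} max(m' - d_k + 1, 0) ). -/
/-!
Dehomogenize by `(s, t, u, v) ↦ (X, Y, 1, 1)`. The bidegree-`(m, m')` piece of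
`Σ_k f_k^{d_k} S(0, -d_k)` is spanned by the products `s^i f_k^(m'-r) u^(m-i) v^r` with `i ≤ m`
and `r < b_k := m' + 1 - d_k`, which become `X^i (Y - a_k)^(m'-r)`. So everything rests on the
one-variable fact that the `(Y - a_k)^(N-r)`, `r < b_k`, are linearly independent as soon as
`Σ b_k ≤ N + 1`. This is Hermite interpolation in dual form: under the apolarity pairing of
polynomials of degree `≤ N`, `(Y - a)^(N-r)` represents the `r`-th Hasse derivative at `a`, and
`(Y - a_{k₀})^{r₀} ∏_{k ≠ k₀} (Y - a_k)^{b_k}` is annihilated by all of these functionals except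
the ones at `a_{k₀}` of order `≥ r₀`. When `Σ b_k > m' + 1`, shrinking the `b_k` to total `m' + 1`
leaves an independent subfamily of `(m + 1)(m' + 1) = dim S_(m,m')` elements.
-/

open MvPolynomial

/-- The bihomogeneous piece of `S = ℝ[s,t,u,v]` of bidegree `(a, b)`. -/
noncomputable def biPiece (a b : ℤ) : Submodule ℝ (MvPolynomial (Fin 4) ℝ) :=
  Submodule.span ℝ {p | ∃ e : Fin 4 →₀ ℕ,
    ((e 0 : ℤ) + e 2 = a) ∧ ((e 1 : ℤ) + e 3 = b) ∧ p = monomial e 1}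

open scoped Nat in
theorem Nat.factorial_mul_factorial_mul_choose_sub {N i r : ℕ} (hri : r ≤ i)
    (hiN : i ≤ N) :
    i ! * (N - i)! * (N - r).choose (N - i) = (N - r)! * r ! * i.choose r := by
  have h₁ := Nat.choose_mul_factorial_mul_factorial (n := N - r) (k := N - i) (by omega)
  have h₂ := Nat.choose_mul_factorial_mul_factorial hri
  rw [show N - r - (N - i) = i - r by omega] at h₁
  apply Nat.eq_of_mul_eq_mul_right (Nat.factorial_pos (i - r))
  calc i ! * (N - i)! * (N - r).choose (N - i) * (i - r)!
      = i ! * ((N - r).choose (N - i) * (N - i)! * (i - r)!) := by ring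
    _ = (N - r)! * (i.choose r * r ! * (i - r)!) := by rw [h₁, h₂, mul_comm]
    _ = (N - r)! * r ! * i.choose r * (i - r)! := by ring

namespace Polynomial

open Finset
open scoped Nat

variable {R : Type*} [CommRing R]

theorem taylor_X_sub_C_self (a : R) : taylor a (X - C a) = X := by simp [taylor_apply]

theorem coeff_taylor_eq_zero_of_dvd {p : R[X]} {a : R} {e r : ℕ} (h : (X - C a) ^ e ∣ p)
    (hr : r < e) : (taylor a p).coeff r = 0 := by
  obtain ⟨q, rfl⟩ := h
  rw [taylor_mul, taylor_pow, taylor_X_sub_C_self, coeff_X_pow_mul', if_neg hr.not_ge]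

theorem coeff_taylor_X_sub_C_pow_mul (a : R) (r : ℕ) (q : R[X]) :
    (taylor a ((X - C a) ^ r * q)).coeff r = q.eval a := by
  rw [taylor_mul, taylor_pow, taylor_X_sub_C_self, coeff_X_pow_mul', if_pos le_rfl, Nat.sub_self,
    taylor_coeff_zero]

theorem coeff_taylor_eq_sum_range {p : R[X]} {N : ℕ} (hp : p.natDegree ≤ N) (a : R) (r : ℕ) :
    (taylor a p).coeff r = ∑ i ∈ range (N + 1), p.coeff i * i.choose r * a ^ (i - r) := by
  conv_lhs => rw [p.as_sum_range' (N + 1) (by omega)]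
  simp only [map_sum, taylor_monomial, finsetSum_coeff, coeff_C_mul, coeff_X_add_C_pow]
  exact sum_congr rfl fun i _ => by ring

-- The apolarity pairing of binary forms of degree `N`, read on their dehomogenizations.
noncomputable def apolarPairing (N : ℕ) (p : R[X]) : R[X] →ₗ[R] R :=
  ∑ i ∈ range (N + 1), ((-1) ^ i * i ! * (N - i)! * p.coeff i) • lcoeff R (N - i)

theorem apolarPairing_X_sub_C_pow {N r : ℕ} {p : R[X]} (hp : p.natDegree ≤ N) (hr : r ≤ N)
    (a : R) :
    apolarPairing N p ((X - C a) ^ (N - r)) =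
      (-1) ^ r * (N - r)! * r ! * (taylor a p).coeff r := by
  rw [coeff_taylor_eq_sum_range hp, mul_sum, apolarPairing, LinearMap.sum_apply]
  refine sum_congr rfl fun i hi => ?_
  have hiN : i ≤ N := by simpa [Nat.lt_succ_iff] using hi
  rw [LinearMap.smul_apply, lcoeff_apply, sub_eq_add_neg, ← C_neg, coeff_X_add_C_pow, smul_eq_mul]
  rcases lt_or_ge i r with hir | hri
  · rw [Nat.choose_eq_zero_of_lt (by omega), Nat.choose_eq_zero_of_lt hir]
    simp
  · have key : ((i ! * (N - i)! * (N - r).choose (N - i) : ℕ) : R)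
        = ((N - r)! * r ! * i.choose r : ℕ) := by
      rw [Nat.factorial_mul_factorial_mul_choose_sub hri hiN]
    push_cast at key
    rw [show N - r - (N - i) = i - r by omega, neg_pow,
      show (-1 : R) ^ i = (-1) ^ r * (-1) ^ (i - r) by rw [← pow_add]; congr 1; omega]
    have hsq : ((-1 : R) ^ (i - r)) ^ 2 = 1 := by
      rw [← pow_mul, mul_comm, pow_mul, neg_one_sq, one_pow]
    linear_combination (-1) ^ r * p.coeff i * ((-1) ^ (i - r)) ^ 2 * a ^ (i - r) * key
      + (-1) ^ r * (N - r)! * r ! * i.choose r * p.coeff i * a ^ (i - r) * hsq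

theorem exists_separating_polynomial [IsDomain R] {ι : Type*} [Fintype ι] [DecidableEq ι]
    {a : ι → R} (ha : Function.Injective a) {b : ι → ℕ} {N : ℕ} (hb : ∑ k, b k ≤ N + 1)
    {k₀ : ι} {r₀ : ℕ} (hr₀ : r₀ < b k₀) :
    ∃ p : R[X], p.natDegree ≤ N ∧
      (∀ k r, r < b k → (k = k₀ → r < r₀) → (taylor (a k) p).coeff r = 0) ∧
      (taylor (a k₀) p).coeff r₀ ≠ 0 := by
  set q : R[X] := ∏ k ∈ univ.erase k₀, (X - C (a k)) ^ b k
  refine ⟨(X - C (a k₀)) ^ r₀ * q, ?_, ?_, ?_⟩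
  · have hq : q.natDegree ≤ ∑ k ∈ univ.erase k₀, b k :=
      (natDegree_prod_le _ _).trans <| sum_le_sum fun k _ => by simp
    have := add_sum_erase univ b (mem_univ k₀)
    refine natDegree_mul_le.trans ?_
    have := natDegree_pow_le_of_le r₀ (natDegree_X_sub_C_le (a k₀))
    omega
  · intro k r hr hk₀
    by_cases hk : k = k₀
    · subst hk
      exact coeff_taylor_eq_zero_of_dvd (dvd_mul_right _ _) (hk₀ rfl)
    · refine coeff_taylor_eq_zero_of_dvd (dvd_mul_of_dvd_right ?_ _) hr
      exact dvd_prod_of_mem _ (mem_erase.2 ⟨hk, mem_univ k⟩)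
  · rw [coeff_taylor_X_sub_C_pow_mul, eval_prod, prod_ne_zero_iff]
    intro k hk
    rw [eval_pow, eval_sub, eval_X, eval_C]
    exact pow_ne_zero _ (sub_ne_zero.2 (ha.ne (ne_of_mem_erase hk).symm))

theorem linearIndependent_X_sub_C_pow {K : Type*} [Field K] [CharZero K] {ι : Type*} [Fintype ι]
    {a : ι → K} (ha : Function.Injective a) {b : ι → ℕ} {N : ℕ} (hb : ∑ k, b k ≤ N + 1) :
    LinearIndependent K (fun x : Σ k, Fin (b k) => (X - C (a x.1)) ^ (N - x.2)) := by
  classical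
  have hle : ∀ k, b k ≤ N + 1 := fun k => (single_le_sum (by simp) (mem_univ k)).trans hb
  rw [Fintype.linearIndependent_iff]
  intro c hc
  by_contra! hne
  -- Pairing the relation with the separating polynomial of a nonzero coefficient of maximal `r`
  -- leaves that coefficient alone.
  obtain ⟨⟨k₀, r₀⟩, hc₀, hmax⟩ := (univ.filter (c · ≠ 0)).exists_max_image (fun x => (x.2 : ℕ))
    (by simpa [Finset.Nonempty] using hne)
  obtain ⟨p, hpN, hp_zero, hp_ne⟩ := exists_separating_polynomial ha hb r₀.2
  have hpair := congrArg (apolarPairing N p) hc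
  simp only [map_sum, map_smul, map_zero, smul_eq_mul] at hpair
  rw [sum_eq_single ⟨k₀, r₀⟩] at hpair
  · dsimp only at hpair
    rw [apolarPairing_X_sub_C_pow hpN (by have := hle k₀; omega)] at hpair
    simp [(mem_filter.1 hc₀).2, hp_ne, Nat.factorial_ne_zero] at hpair
  · rintro ⟨k, r⟩ - hkr
    dsimp only
    rw [apolarPairing_X_sub_C_pow hpN (by have := r.isLt; have := hle k; omega)]
    by_cases hk : k = k₀
    · subst hk
      have hr : (r : ℕ) ≠ r₀ := fun h => hkr (by rw [Fin.ext h])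
      rcases hr.lt_or_gt with hr | hr
      · simp [hp_zero k r r.2 fun _ => hr]
      · have : c ⟨k, r⟩ = 0 := by
          by_contra h
          exact (hmax ⟨k, r⟩ (by simpa using h)).not_gt hr
        simp [this]
    · simp [hp_zero k r r.2 fun h => absurd h hk]
  · simp

theorem _root_.LinearIndependent.X_pow_mul_C {R A : Type*} [CommRing R] [Semiring A]
    [Algebra R A] {ι : Type*} {w : ι → A} (hw : LinearIndependent R w) (M : ℕ) :
    LinearIndependent R fun q : Fin M × ι => (X : A[X]) ^ (q.1 : ℕ) * C (w q.2) := by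
  classical
  let coeffs : A[X] →ₗ[R] Fin M → A := LinearMap.pi fun i => (lcoeff A i).restrictScalars R
  refine LinearIndependent.of_comp coeffs ?_
  rw [← linearIndependent_equiv (Equiv.sigmaEquivProd _ _)]
  convert Pi.linearIndependent_single (fun (_ : Fin M) => w) fun _ => hw using 1
  · ext ⟨i, j⟩ i'
    simp [coeffs, Pi.single_apply, Fin.ext_iff]
  · rfl

end Polynomial

section Bigraded

open Finset Submodule

theorem biPiece_eq_bot {a b : ℤ} (hb : b < 0) : biPiece a b = ⊥ := by
  rw [biPiece, span_eq_bot]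
  rintro _ ⟨e, -, he, -⟩
  omega

theorem monomial_one_fin_four (e : Fin 4 →₀ ℕ) :
    (monomial e 1 : MvPolynomial (Fin 4) ℝ) = X 0 ^ e 0 * X 1 ^ e 1 * X 2 ^ e 2 * X 3 ^ e 3 := by
  rw [monomial_eq, Finsupp.prod_fintype _ _ (by simp), Fin.prod_univ_four, C_1, one_mul]

noncomputable def bidegFamily (m n : ℕ) (α : ℝ) (q : Fin (m + 1) × Fin (n + 1)) :
    MvPolynomial (Fin 4) ℝ :=
  X 0 ^ (q.1 : ℕ) * (X 1 - C α * X 3) ^ (q.2 : ℕ) * X 2 ^ (m - q.1) * X 3 ^ (n - q.2)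

theorem biPiece_eq_span_bidegFamily_zero (m n : ℕ) :
    biPiece m n = span ℝ (Set.range (bidegFamily m n 0)) := by
  rw [biPiece]
  congr 1
  ext p
  constructor
  · rintro ⟨e, h₁, h₂, rfl⟩
    refine ⟨(⟨e 0, by omega⟩, ⟨e 1, by omega⟩), ?_⟩
    rw [monomial_one_fin_four, show e 2 = m - e 0 by omega, show e 3 = n - e 1 by omega]
    simp [bidegFamily]
  · rintro ⟨⟨⟨i, hi⟩, ⟨j, hj⟩⟩, rfl⟩
    refine ⟨Finsupp.single 0 i + Finsupp.single 1 j + Finsupp.single 2 (m - i)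
      + Finsupp.single 3 (n - j), ?_, ?_, by simp [monomial_one_fin_four, bidegFamily]⟩
    all_goals
      simp only [Finsupp.coe_add, Pi.add_apply, Finsupp.single_apply, Fin.reduceEq, reduceIte]
      omega

theorem span_bidegFamily_le (m n : ℕ) (γ δ : ℝ) :
    span ℝ (Set.range (bidegFamily m n γ)) ≤ span ℝ (Set.range (bidegFamily m n δ)) := by
  rw [span_le]
  rintro _ ⟨⟨i, ⟨j, hj⟩⟩, rfl⟩
  have hexpand : (X 1 - C γ * X 3 : MvPolynomial (Fin 4) ℝ) ^ j = ∑ w ∈ range (j + 1),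
      (X 1 - C δ * X 3) ^ w * (C (δ - γ) * X 3) ^ (j - w) * (j.choose w : MvPolynomial _ ℝ) := by
    rw [← add_pow, C_sub]
    ring
  simp only [bidegFamily]
  rw [hexpand, mul_sum, sum_mul, sum_mul]
  refine sum_mem fun w hw => ?_
  rw [mem_range] at hw
  have hwn : w < n + 1 := by omega
  convert smul_mem _ ((δ - γ) ^ (j - w) * j.choose w)
    (subset_span (R := ℝ) (Set.mem_range_self (f := bidegFamily m n δ) (i, ⟨w, hwn⟩))) using 1
  rw [smul_eq_C_mul, bidegFamily, show n - w = (j - w) + (n - j) by omega, pow_add, mul_pow]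
  simp only [map_mul, map_pow, map_natCast]
  ring

theorem biPiece_eq_span_bidegFamily (m n : ℕ) (α : ℝ) :
    biPiece m n = span ℝ (Set.range (bidegFamily m n α)) := by
  rw [biPiece_eq_span_bidegFamily_zero]
  exact (span_bidegFamily_le m n 0 α).antisymm (span_bidegFamily_le m n α 0)

variable {ι : Type*}

noncomputable def powerFamily (m N : ℕ) (a : ι → ℝ) (b : ι → ℕ)
    (q : Fin (m + 1) × Σ k, Fin (b k)) : MvPolynomial (Fin 4) ℝ :=
  X 0 ^ (q.1 : ℕ) * (X 1 - C (a q.2.1) * X 3) ^ (N - q.2.2) * X 2 ^ (m - q.1) * X 3 ^ (q.2.2 : ℕ)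

theorem iSup_map_mulLeft_biPiece (m N : ℕ) (a : ι → ℝ) (d : ι → ℕ) :
    ⨆ k, map (LinearMap.mulLeft ℝ ((X 1 - C (a k) * X 3 : MvPolynomial (Fin 4) ℝ) ^ d k))
        (biPiece m ((N : ℤ) - d k)) =
      span ℝ (Set.range (powerFamily m N a fun k => N + 1 - d k)) := by
  apply le_antisymm
  · refine iSup_le fun k => ?_
    rcases le_or_gt (d k) N with hk | hk
    · rw [show (N : ℤ) - d k = ((N - d k : ℕ) : ℤ) by omega, biPiece_eq_span_bidegFamily _ _ (a k),
        map_span, ← Set.range_comp, span_le]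
      rintro _ ⟨⟨i, ⟨j, hj⟩⟩, rfl⟩
      refine subset_span ⟨(i, ⟨k, ⟨N - d k - j, by omega⟩⟩), ?_⟩
      simp only [Function.comp_apply, LinearMap.mulLeft_apply, powerFamily, bidegFamily]
      rw [show N - (N - d k - j) = d k + j by omega, pow_add]
      ring
    · rw [biPiece_eq_bot (by omega), Submodule.map_bot]
      exact bot_le
  · rw [span_le]
    rintro _ ⟨⟨i, ⟨k, ⟨r, hr⟩⟩⟩, rfl⟩
    refine mem_iSup_of_mem k ?_
    rw [show (N : ℤ) - d k = ((N - d k : ℕ) : ℤ) by omega, biPiece_eq_span_bidegFamily _ _ (a k),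
      map_span, ← Set.range_comp]
    refine subset_span ⟨(i, ⟨N - d k - r, by omega⟩), ?_⟩
    simp only [Function.comp_apply, LinearMap.mulLeft_apply, powerFamily, bidegFamily]
    rw [show N - d k - (N - d k - r) = r by omega, show N - r = d k + (N - d k - r) by omega,
      pow_add]
    ring

theorem powerFamily_mem_biPiece {m N : ℕ} {a : ι → ℝ} {b : ι → ℕ} (hb : ∀ k, b k ≤ N + 1)
    (q : Fin (m + 1) × Σ k, Fin (b k)) : powerFamily m N a b q ∈ biPiece m N := by
  obtain ⟨i, ⟨k, ⟨r, hr⟩⟩⟩ := q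
  rw [biPiece_eq_span_bidegFamily m N (a k)]
  refine subset_span ⟨(i, ⟨N - r, by omega⟩), ?_⟩
  simp only [powerFamily, bidegFamily]
  rw [show N - (N - r) = r by have := hb k; omega]

noncomputable def dehomogenize : MvPolynomial (Fin 4) ℝ →ₐ[ℝ] Polynomial (Polynomial ℝ) :=
  aeval ![Polynomial.X, Polynomial.C Polynomial.X, 1, 1]

theorem dehomogenize_powerFamily (m N : ℕ) (a : ι → ℝ) (b : ι → ℕ)
    (q : Fin (m + 1) × Σ k, Fin (b k)) :
    dehomogenize (powerFamily m N a b q) = Polynomial.X ^ (q.1 : ℕ) *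
      Polynomial.C ((Polynomial.X - Polynomial.C (a q.2.1)) ^ (N - q.2.2)) := by
  simp [dehomogenize, powerFamily, Polynomial.C_sub, Polynomial.algebraMap_apply]

theorem linearIndependent_powerFamily [Fintype ι] {a : ι → ℝ} (ha : Function.Injective a)
    {b : ι → ℕ} {N : ℕ} (hb : ∑ k, b k ≤ N + 1) (m : ℕ) :
    LinearIndependent ℝ (powerFamily m N a b) := by
  refine LinearIndependent.of_comp dehomogenize.toLinearMap ?_
  rw [show dehomogenize.toLinearMap ∘ powerFamily m N a b = _ from
    funext (dehomogenize_powerFamily m N a b)]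
  exact (Polynomial.linearIndependent_X_sub_C_pow ha hb).X_pow_mul_C (m + 1)

theorem exists_le_sum_eq [Fintype ι] {b : ι → ℕ} {n : ℕ} (hn : n ≤ ∑ k, b k) :
    ∃ g ≤ b, ∑ k, g k = n := by
  classical
  induction n with
  | zero => exact ⟨0, fun _ => Nat.zero_le _, by simp⟩
  | succ n ih =>
    obtain ⟨g, hgb, hg⟩ := ih (by omega)
    obtain ⟨i, -, hi⟩ := exists_lt_of_sum_lt (hg ▸ hn : ∑ k, g k < ∑ k, b k)
    refine ⟨g + Pi.single i 1, fun k => ?_, by simp [sum_add_distrib, hg]⟩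
    rcases eq_or_ne k i with rfl | hk
    · simpa using hi
    · simpa [hk] using hgb k

theorem finrank_span_powerFamily [Fintype ι] {a : ι → ℝ} (ha : Function.Injective a)
    {b : ι → ℕ} {N : ℕ} (hb : ∀ k, b k ≤ N + 1) (m : ℕ) :
    Module.finrank ℝ (span ℝ (Set.range (powerFamily m N a b))) =
      (m + 1) * min (N + 1) (∑ k, b k) := by
  rcases le_total (∑ k, b k) (N + 1) with hsum | hsum
  · rw [finrank_span_eq_card (linearIndependent_powerFamily ha hsum m), min_eq_right hsum]
    simp [Fintype.card_sigma]
  · obtain ⟨g, hgb, hg⟩ := exists_le_sum_eq hsum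
    rw [min_eq_left hsum]
    have := FiniteDimensional.span_of_finite ℝ (Set.finite_range (powerFamily m N a b))
    have := FiniteDimensional.span_of_finite ℝ (Set.finite_range (bidegFamily m N 0))
    have hsub : span ℝ (Set.range (powerFamily m N a g)) ≤
        span ℝ (Set.range (powerFamily m N a b)) :=
      span_mono <| Set.range_subset_iff.2 fun ⟨i, k, r⟩ => ⟨(i, ⟨k, Fin.castLE (hgb k) r⟩), rfl⟩
    have hle : span ℝ (Set.range (powerFamily m N a b)) ≤
        span ℝ (Set.range (bidegFamily m N 0)) :=
      biPiece_eq_span_bidegFamily_zero m N ▸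
        span_le.2 (Set.range_subset_iff.2 (powerFamily_mem_biPiece hb))
    refine le_antisymm ((finrank_mono hle).trans ((finrank_range_le_card _).trans (by simp))) ?_
    calc (m + 1) * (N + 1)
        = Module.finrank ℝ (span ℝ (Set.range (powerFamily m N a g))) := by
          rw [finrank_span_eq_card (linearIndependent_powerFamily ha hg.le m)]
          simp [Fintype.card_sigma, hg]
      _ ≤ _ := finrank_mono hsub

end Bigraded

/-- for distinct reals `a₁, …, a_l`, `d₁, …, d_l ∈ ℕ` and
`f_k = t - a_k v`, the bidegree-`(m,m')` piece of `Σ_k f_k^{d_k} S(0,-d_k)`,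
i.e. `Σ_k f_k^{d_k} · S_{(m, m'-d_k)}`, has dimension
`(m+1) · min (m'+1) (Σ_k max (m'-d_k+1) 0)`. -/
theorem stmt3 (l : ℕ) (a : Fin l → ℝ) (ha : Function.Injective a)
    (d : Fin l → ℕ) (m m' : ℕ) :
    (Module.finrank ℝ
        ↥(⨆ k : Fin l, Submodule.map
          (LinearMap.mulLeft ℝ
            ((X 1 - C (a k) * X 3 : MvPolynomial (Fin 4) ℝ) ^ d k))
          (biPiece (m : ℤ) ((m' : ℤ) - d k))) : ℤ) =
      ((m : ℤ) + 1) * min ((m' : ℤ) + 1) (∑ k, max ((m' : ℤ) - d k + 1) 0) := by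
  rw [iSup_map_mulLeft_biPiece, finrank_span_powerFamily ha fun k => by omega]
  push_cast
  congr 2
  refine Finset.sum_congr rfl fun k _ => ?_
  omega
end

section
/- Let p, p' ∈ ℝ[s,t] be polynomials, and let l = s - a for some a ∈ ℝ. Define the piecewise function f on ℝ² by f(x,y) = p(x,y) if x ≤ a and f(x,y) = p'(x,y) if x ≥ a. Then f is r times continuously differentiable if and only if p - p' lies in the ideal generated by l^{r+1}. -/
/-!
Restricted to a horizontal line `t = y`, a `C^r` function `f` is a `C^r` function of one variable
that agrees with the polynomial `p(·, y)` on `(-∞, a]` and with `p'(·, y)` on `[a, ∞)`; comparing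
one-sided derivatives at `a` shows that the derivatives of order `≤ r` of `p(·, y) - p'(·, y)`
vanish at `a`. Viewing `p - p'` as a polynomial in `s` over `ℝ[t]`, these derivatives at `a` are
polynomials in `t` vanishing at every `y`, hence zero, so `(s - a)^(r+1)` divides `p - p'`.
Conversely, if `p - p' = q (s - a)^(r+1)` then `f = p' + q min(s - a, 0)^(r+1)`, and
`x ↦ min(x, 0)^(r+1)` is `C^r`.
-/

open MvPolynomial Set Filter Topology

namespace Polynomial

variable {𝕜 : Type*} [NontriviallyNormedField 𝕜]

theorem iteratedDeriv_eval (q : 𝕜[X]) (k : ℕ) :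
    iteratedDeriv k (fun x => q.eval x) = fun x => (derivative^[k] q).eval x := by
  induction k with
  | zero => simp
  | succ k ih =>
    rw [iteratedDeriv_succ, ih, Function.iterate_succ_apply']
    funext x
    exact Polynomial.deriv _

theorem iteratedDeriv_eq_eval_of_eqOn {g : 𝕜 → 𝕜} {q : 𝕜[X]} {s : Set 𝕜} {x : 𝕜} {k : ℕ}
    (hg : ContDiffAt 𝕜 k g x) (hs : UniqueDiffOn 𝕜 s) (hx : x ∈ s)
    (h : EqOn g (fun x => q.eval x) s) :
    iteratedDeriv k g x = (derivative^[k] q).eval x := by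
  have hq : ContDiffAt 𝕜 k (fun x => q.eval x) x := by
    simpa using (contDiff_aeval (R := 𝕜) q k).contDiffAt (x := x)
  rw [← iteratedDerivWithin_eq_iteratedDeriv hs hg hx, iteratedDerivWithin_congr h hx,
    iteratedDerivWithin_eq_iteratedDeriv hs hq hx, iteratedDeriv_eval]

theorem iterate_derivative_eval_eq_of_contDiffAt {g : ℝ → ℝ} {q₁ q₂ : ℝ[X]} {a : ℝ} {k : ℕ}
    (hg : ContDiffAt ℝ k g a) (h₁ : EqOn g (fun x => q₁.eval x) (Iic a))
    (h₂ : EqOn g (fun x => q₂.eval x) (Ici a)) :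
    (derivative^[k] q₁).eval a = (derivative^[k] q₂).eval a := by
  rw [← iteratedDeriv_eq_eval_of_eqOn hg (uniqueDiffOn_Iic a) self_mem_Iic h₁,
    iteratedDeriv_eq_eval_of_eqOn hg (uniqueDiffOn_Ici a) self_mem_Ici h₂]

theorem X_sub_C_pow_dvd_of_iterate_derivative_eval_eq_zero {R : Type*} [CommRing R] [IsDomain R]
    [CharZero R] {Q : R[X]} {c : R} {n : ℕ} (h : ∀ k ≤ n, (derivative^[k] Q).eval c = 0) :
    (X - C c) ^ (n + 1) ∣ Q := by
  rcases eq_or_ne Q 0 with rfl | hQ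
  · exact dvd_zero _
  · exact (le_rootMultiplicity_iff hQ).1 (lt_rootMultiplicity_of_isRoot_iterate_derivative hQ h)

end Polynomial

namespace MvPolynomial

variable {R : Type*} [CommRing R] {m : ℕ}

theorem finSuccEquiv_X_zero_sub_C (a : R) :
    finSuccEquiv R m (X 0 - C a) = Polynomial.X - Polynomial.C (C a) := by
  simp [finSuccEquiv_apply]

theorem eval_iterate_derivative_finSuccEquiv_eval_C (D : MvPolynomial (Fin (m + 1)) R)
    (s : Fin m → R) (a : R) (k : ℕ) :
    eval s ((Polynomial.derivative^[k] (finSuccEquiv R m D)).eval (C a)) =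
      (Polynomial.derivative^[k] ((finSuccEquiv R m D).map (eval s))).eval a := by
  rw [Polynomial.iterate_derivative_map, Polynomial.eval_map, ← Polynomial.eval₂_hom, eval_C]

theorem mem_span_X_zero_sub_C_pow [IsDomain R] [CharZero R] {D : MvPolynomial (Fin (m + 1)) R}
    {a : R} {n : ℕ}
    (h : ∀ s : Fin m → R, ∀ k ≤ n,
      (Polynomial.derivative^[k] ((finSuccEquiv R m D).map (eval s))).eval a = 0) :
    D ∈ Ideal.span {(X 0 - C a) ^ (n + 1)} := by
  have hdvd : (Polynomial.X - Polynomial.C (C a)) ^ (n + 1) ∣ finSuccEquiv R m D :=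
    Polynomial.X_sub_C_pow_dvd_of_iterate_derivative_eval_eq_zero fun k hk =>
      MvPolynomial.funext fun s => by
        rw [eval_iterate_derivative_finSuccEquiv_eval_C, h s k hk, map_zero]
  rw [Ideal.mem_span_singleton]
  simpa [← finSuccEquiv_X_zero_sub_C] using map_dvd (finSuccEquiv R m).symm hdvd

theorem eval_vecCons_eq_eval_map_finSuccEquiv (q : MvPolynomial (Fin 2) R) (t : R)
    (s : Fin 1 → R) :
    eval ![t, s 0] q = ((finSuccEquiv R 1 q).map (eval s)).eval t := by
  rw [← eval_eq_eval_mv_eval']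
  congr 2
  funext i
  fin_cases i <;> rfl

theorem contDiff_eval {𝕜 σ : Type*} [NontriviallyNormedField 𝕜] [Fintype σ]
    (q : MvPolynomial σ 𝕜) (n : WithTop ℕ∞) : ContDiff 𝕜 n fun x : σ → 𝕜 => eval x q := by
  induction q using MvPolynomial.induction_on with
  | C c => simpa using contDiff_const
  | add p q hp hq => simpa using hp.add hq
  | mul_X p i hp => simpa using hp.mul (contDiff_apply 𝕜 𝕜 i)

end MvPolynomial

theorem hasDerivAt_min_zero_pow (n : ℕ) (x : ℝ) :
    HasDerivAt (fun x : ℝ => min x 0 ^ (n + 2)) ((n + 2) * min x 0 ^ (n + 1)) x := by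
  rcases lt_trichotomy x 0 with hx | rfl | hx
  · have h : (fun x : ℝ => min x 0 ^ (n + 2)) =ᶠ[𝓝 x] fun x => x ^ (n + 2) := by
      filter_upwards [Iio_mem_nhds hx] with y hy using by rw [min_eq_left hy.le]
    simpa [min_eq_left hx.le] using (hasDerivAt_pow (n + 2) x).congr_of_eventuallyEq h
  · have hl : HasDerivWithinAt (fun x : ℝ => min x 0 ^ (n + 2)) 0 (Iic 0) 0 :=
      ((hasDerivAt_pow (n + 2) 0).hasDerivWithinAt.congr (fun y hy => by rw [min_eq_left hy])
        (by simp)).congr_deriv (by simp)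
    have hr : HasDerivWithinAt (fun x : ℝ => min x 0 ^ (n + 2)) 0 (Ici 0) 0 :=
      (hasDerivWithinAt_const 0 _ 0).congr (fun y hy => by simp [min_eq_right (mem_Ici.1 hy)])
        (by simp)
    simpa [Iic_union_Ici, hasDerivWithinAt_univ] using hl.union hr
  · have h : (fun x : ℝ => min x 0 ^ (n + 2)) =ᶠ[𝓝 x] fun _ => 0 := by
      filter_upwards [Ioi_mem_nhds hx] with y hy using by simp [min_eq_right (mem_Ioi.1 hy).le]
    simpa [min_eq_right hx.le] using (hasDerivAt_const x (0 : ℝ)).congr_of_eventuallyEq h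

theorem contDiff_min_zero_pow (r : ℕ) : ContDiff ℝ r fun x : ℝ => min x 0 ^ (r + 1) := by
  induction r with
  | zero => simpa using continuous_id.min continuous_const
  | succ r ih =>
    rw [Nat.cast_succ, contDiff_succ_iff_deriv]
    refine ⟨fun x => (hasDerivAt_min_zero_pow r x).differentiableAt, by simp, ?_⟩
    rw [funext fun x => (hasDerivAt_min_zero_pow r x).deriv]
    exact contDiff_const.mul ih

theorem contDiff_eval_fst_snd (q : MvPolynomial (Fin 2) ℝ) (n : WithTop ℕ∞) :
    ContDiff ℝ n fun x : ℝ × ℝ => eval ![x.1, x.2] q :=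
  (q.contDiff_eval n).comp <| contDiff_pi.2 <| Fin.forall_fin_two.2
    ⟨by simpa using contDiff_fst, by simpa using contDiff_snd⟩

section Gluing

variable {p p' : MvPolynomial (Fin 2) ℝ} {a : ℝ} {r : ℕ} {f : ℝ × ℝ → ℝ}

theorem mem_span_of_contDiff_of_eq_eval (hf : ContDiff ℝ r f)
    (hf₁ : ∀ x : ℝ × ℝ, x.1 ≤ a → f x = eval ![x.1, x.2] p)
    (hf₂ : ∀ x : ℝ × ℝ, a ≤ x.1 → f x = eval ![x.1, x.2] p') :
    p - p' ∈ Ideal.span {(X 0 - C a : MvPolynomial (Fin 2) ℝ) ^ (r + 1)} := by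
  refine mem_span_X_zero_sub_C_pow fun s k hk => ?_
  have hg : ContDiffAt ℝ k (fun t => f (t, s 0)) a :=
    (hf.comp (contDiff_id.prodMk contDiff_const)).contDiffAt.of_le (by exact_mod_cast hk)
  have hder := Polynomial.iterate_derivative_eval_eq_of_contDiffAt hg
    (fun t ht => (hf₁ (t, s 0) ht).trans (eval_vecCons_eq_eval_map_finSuccEquiv p t s))
    (fun t ht => (hf₂ (t, s 0) ht).trans (eval_vecCons_eq_eval_map_finSuccEquiv p' t s))
  rw [map_sub, Polynomial.map_sub, Polynomial.iterate_derivative_sub, Polynomial.eval_sub, hder,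
    sub_self]

theorem contDiff_of_mem_span_of_eq_eval
    (hf₁ : ∀ x : ℝ × ℝ, x.1 ≤ a → f x = eval ![x.1, x.2] p)
    (hf₂ : ∀ x : ℝ × ℝ, a ≤ x.1 → f x = eval ![x.1, x.2] p')
    (h : p - p' ∈ Ideal.span {(X 0 - C a : MvPolynomial (Fin 2) ℝ) ^ (r + 1)}) :
    ContDiff ℝ r f := by
  obtain ⟨q, hq⟩ := Ideal.mem_span_singleton'.1 h
  have hf : f = fun x =>
      eval ![x.1, x.2] p' + eval ![x.1, x.2] q * min (x.1 - a) 0 ^ (r + 1) := by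
    funext x
    have hev := congrArg (eval ![x.1, x.2]) hq
    simp only [map_sub, map_mul, map_pow, eval_X, eval_C, Matrix.cons_val_zero] at hev
    rcases le_total x.1 a with hx | hx
    · rw [hf₁ x hx, min_eq_left (sub_nonpos.2 hx), hev]
      ring
    · rw [hf₂ x hx, min_eq_right (sub_nonneg.2 hx), zero_pow r.succ_ne_zero, mul_zero, add_zero]
  rw [hf]
  exact (contDiff_eval_fst_snd p' r).add ((contDiff_eval_fst_snd q r).mul
    ((contDiff_min_zero_pow r).comp (contDiff_fst.sub contDiff_const)))

end Gluing

/-- Billera–Rose smoothness criterion: let `p, p' ∈ ℝ[s,t]`,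
`l = s - a`, and let `f : ℝ² → ℝ` equal `p` on `{x ≤ a}` and `p'` on `{x ≥ a}`.
Then `f` is `C^r` iff `p - p'` lies in the ideal generated by `l^(r+1)`. -/
theorem stmt5 (p p' : MvPolynomial (Fin 2) ℝ) (a : ℝ) (r : ℕ)
    (f : ℝ × ℝ → ℝ)
    (hf₁ : ∀ x : ℝ × ℝ, x.1 ≤ a → f x = eval ![x.1, x.2] p)
    (hf₂ : ∀ x : ℝ × ℝ, a ≤ x.1 → f x = eval ![x.1, x.2] p') :
    ContDiff ℝ r f ↔
      p - p' ∈ Ideal.span {((X 0 - C a : MvPolynomial (Fin 2) ℝ)) ^ (r + 1)} :=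
  ⟨fun hf => mem_span_of_contDiff_of_eq_eval hf hf₁ hf₂, contDiff_of_mem_span_of_eq_eval hf₁ hf₂⟩
end

section
/- Let F = ⊕_{k=1}^{n} F_k be a graded vector space with ordered summands and D ⊆ F a subspace. For each k, let G_k ⊆ F_k be the set of initials in(p) with p ∈ D and in(p) ∈ F_k arising from a fixed generating family of D. Then dim(F/D)_d ≤ Σ_k (dim (F_k)_d − dim (span G_k)_d). -/
/-!
Filter `D` by the position of the last nonzero component: the `k`-th graded piece of this
filtration is mapped isomorphically by the `k`-th projection onto the space of all initials in
`F k` of elements of `D`, so `dim D` is the sum of the dimensions of these spaces. Each of them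
contains the span of the initials of the generators.
-/

open Module

def initials {n : ℕ} {F : Fin n → Type*} [∀ k, Zero (F k)] (G : Set (∀ k, F k)) (k : Fin n) :
    Set (F k) :=
  {x : F k | ∃ p ∈ G, p k ≠ 0 ∧ (∀ j, k < j → p j = 0) ∧ x = p k}

namespace Submodule

variable {K : Type*} [DivisionRing K] {n : ℕ} {F : Fin n → Type*}
  [∀ k, AddCommGroup (F k)] [∀ k, Module K (F k)]

def supportedBelow (D : Submodule K (∀ k, F k)) (m : ℕ) : Submodule K (∀ k, F k) :=
  D ⊓ ⨅ (j : Fin n) (_ : m ≤ (j : ℕ)), LinearMap.ker (LinearMap.proj j)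

/-- The initials in `F k` of elements of `D`, together with `0`. -/
def initialSpace (D : Submodule K (∀ k, F k)) (k : Fin n) : Submodule K (F k) :=
  (D.supportedBelow (k + 1)).map (LinearMap.proj k)

variable (D : Submodule K (∀ k, F k))

theorem mem_supportedBelow {m : ℕ} {p : ∀ k, F k} :
    p ∈ D.supportedBelow m ↔ p ∈ D ∧ ∀ j : Fin n, m ≤ (j : ℕ) → p j = 0 := by
  simp [supportedBelow, mem_inf, mem_iInf]

theorem supportedBelow_zero : D.supportedBelow 0 = ⊥ := by
  ext p
  simp only [mem_supportedBelow, zero_le, forall_const, mem_bot]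
  exact ⟨fun h => funext h.2, by rintro rfl; exact ⟨D.zero_mem, fun _ => rfl⟩⟩

theorem supportedBelow_self : D.supportedBelow n = D := by
  ext p
  simp only [mem_supportedBelow, and_iff_left_iff_imp]
  intro _ j hj
  exact absurd j.isLt (by omega)

theorem supportedBelow_succ_inf_ker_proj (k : Fin n) :
    D.supportedBelow (k + 1) ⊓ LinearMap.ker (LinearMap.proj k) = D.supportedBelow k := by
  ext p
  simp only [mem_inf, LinearMap.mem_ker, LinearMap.proj_apply, mem_supportedBelow]
  constructor
  · rintro ⟨⟨hD, hvanish⟩, hk⟩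
    refine ⟨hD, fun j hj => ?_⟩
    rcases hj.eq_or_lt with h | h
    · rwa [Fin.ext h.symm]
    · exact hvanish j h
  · rintro ⟨hD, hvanish⟩
    exact ⟨⟨hD, fun j hj => hvanish j (Nat.le_of_succ_le hj)⟩, hvanish k le_rfl⟩

theorem span_initials_le_initialSpace (G : Set (∀ k, F k)) (k : Fin n) :
    span K (initials G k) ≤ (span K G).initialSpace k := by
  rw [span_le]
  rintro x ⟨p, hpG, -, hvanish, rfl⟩
  refine ⟨p, (mem_supportedBelow _).2 ⟨subset_span hpG, fun j hj => hvanish j ?_⟩, rfl⟩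
  exact_mod_cast Nat.lt_of_succ_le hj

variable [∀ k, FiniteDimensional K (F k)]

theorem finrank_supportedBelow_succ (k : Fin n) :
    finrank K (D.supportedBelow (k + 1)) =
      finrank K (D.initialSpace k) + finrank K (D.supportedBelow k) := by
  have h := LinearMap.finrank_range_add_finrank_ker
    ((LinearMap.proj (R := K) (φ := F) k).domRestrict (D.supportedBelow (k + 1)))
  rw [LinearMap.range_domRestrict, LinearMap.ker_domRestrict, ← finrank_map_subtype_eq,
    map_comap_subtype, supportedBelow_succ_inf_ker_proj] at h
  exact h.symm

theorem finrank_eq_sum_finrank_initialSpace :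
    finrank K D = ∑ k : Fin n, finrank K (D.initialSpace k) := by
  have htelescope := Finset.sum_range_sub (fun m => (finrank K (D.supportedBelow m) : ℤ)) n
  rw [supportedBelow_self, supportedBelow_zero, finrank_bot, Nat.cast_zero, sub_zero,
    ← Fin.sum_univ_eq_sum_range (fun m => (finrank K (D.supportedBelow (m + 1)) : ℤ) -
      finrank K (D.supportedBelow m))] at htelescope
  simp only [finrank_supportedBelow_succ, Nat.cast_add, add_sub_cancel_right] at htelescope
  exact_mod_cast htelescope.symm

theorem finrank_quotient_eq_sum_sub_finrank_initialSpace :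
    (finrank K ((∀ k, F k) ⧸ D) : ℤ) =
      ∑ k : Fin n, ((finrank K (F k) : ℤ) - finrank K (D.initialSpace k)) := by
  have hquot := D.finrank_quotient_add_finrank
  rw [finrank_pi_fintype, finrank_eq_sum_finrank_initialSpace] at hquot
  rw [Finset.sum_sub_distrib, eq_sub_iff_add_eq]
  exact_mod_cast hquot

end Submodule

/-- let `F = ⊕_k F_k` with ordered summands, `D ⊆ F` a subspace
spanned by a generating family `G`, and for each `k` let `G_k ⊆ F_k` be the set
of initials of members of `G` landing in `F_k`.  Then
`dim (F/D) ≤ Σ_k (dim F_k − dim span G_k)`. -/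
theorem stmt16 (n : ℕ) (F : Fin n → Type*) [∀ k, AddCommGroup (F k)]
    [∀ k, Module ℝ (F k)] [∀ k, FiniteDimensional ℝ (F k)]
    (D : Submodule ℝ (∀ k, F k)) (G : Set (∀ k, F k))
    (hG : Submodule.span ℝ G = D) :
    (Module.finrank ℝ ((∀ k, F k) ⧸ D) : ℤ) ≤
      ∑ k : Fin n, ((Module.finrank ℝ (F k) : ℤ) -
        Module.finrank ℝ (Submodule.span ℝ
          {x : F k | ∃ p ∈ G, p k ≠ 0 ∧ (∀ j, k < j → p j = 0) ∧ x = p k})) := by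
  subst hG
  rw [Submodule.finrank_quotient_eq_sum_sub_finrank_initialSpace]
  gcongr with k
  exact Submodule.finrank_mono (Submodule.span_initials_le_initialSpace G k)
end
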